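/- (Refined expurgation with vanishing expurgated fraction, existence form.) Let ε > 0, let M ≥ 1, let M' be an integer with M' ≥ M(1+ε) and M' ≥ 2, let μ be a pairwise-independent ensemble with M' codewords and marginal Q, let ρ ≥ 1, and set γ = (1+ε)/ε. Then there exists a code c ∈ (𝒳^n)^{M'} such that at least M of the indices m ∈ {1, …, M'} satisfy P_{e,m}(c) ≤ γ^ρ · ( (M' − 1) · ∑_{x,x'∈𝒳^n} Q(x)Q(x')·Z(x,x')^{1/ρ} )^ρ. -/

import Mathlib

open scoped Classical

/-- `W` is a channel: nonnegative, and each row sums to one. -/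
def IsChannel {𝒳 𝒴 : Type*} [Fintype 𝒴] (W : 𝒳 → 𝒴 → ℝ) : Prop :=
  (∀ x y, 0 ≤ W x y) ∧ ∀ x, ∑ y, W x y = 1

/-- Maximum-likelihood error probability of message `m` under code `c`
(ties counted as errors). -/
noncomputable def Pem {𝒳 𝒴 : Type*} [Fintype 𝒴] {M : ℕ}
    (W : 𝒳 → 𝒴 → ℝ) (c : Fin M → 𝒳) (m : Fin M) : ℝ :=
  ∑ y, W (c m) y * (if ∃ k, k ≠ m ∧ W (c m) y ≤ W (c k) y then (1:ℝ) else 0)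

/-- Bhattacharyya coefficient between inputs `x` and `x'`. -/
noncomputable def Bhat {𝒳 𝒴 : Type*} [Fintype 𝒴] (W : 𝒳 → 𝒴 → ℝ) (x x' : 𝒳) : ℝ :=
  ∑ y, Real.sqrt (W x y * W x' y)

/-- `p` is a probability mass function on a finite type. -/
def IsPMF {α : Type*} [Fintype α] (p : α → ℝ) : Prop :=
  (∀ a, 0 ≤ p a) ∧ ∑ a, p a = 1

/-- Probability of the event `S` under the pmf `μ`. -/
noncomputable def pmfProb {α : Type*} [Fintype α] (μ : α → ℝ) (S : α → Prop) : ℝ :=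
  ∑ a, if S a then μ a else 0

/-- Expectation of `f` under the pmf `μ`. -/
noncomputable def pmfExp {α : Type*} [Fintype α] (μ : α → ℝ) (f : α → ℝ) : ℝ :=
  ∑ a, μ a * f a

/-- `μ` is a pairwise-independent ensemble of `M` codewords with marginal `Q`:
each codeword has law `Q` and each pair of distinct codewords has law `Q × Q`. -/
def PairwiseIndepEnsemble {𝒳 : Type*} [Fintype 𝒳] {M : ℕ}
    (μ : (Fin M → 𝒳) → ℝ) (Q : 𝒳 → ℝ) : Prop :=
  IsPMF μ ∧ IsPMF Q ∧
  (∀ (m : Fin M) (x : 𝒳), pmfProb μ (fun c => c m = x) = Q x) ∧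
  (∀ (m k : Fin M), m ≠ k → ∀ (x x' : 𝒳),
    pmfProb μ (fun c => c m = x ∧ c k = x') = Q x * Q x')

/-! With `s = 1/ρ ≤ 1`, the union bound, `1{W(y|x) ≤ W(y|x')} ≤ √(W(y|x') / W(y|x))` and the
subadditivity of `t ↦ t ^ s` give `P_{e,m}(c) ^ s ≤ ∑_{k ≠ m} Z(c_m, c_k) ^ s`, whose mean under a
pairwise-independent ensemble is `A = (M' - 1) ∑ Q x Q x' Z(x, x') ^ s`. By Markov's inequality the
expected number of messages with `P_{e,m} ^ s > γ A` is at most `M' / γ`, so some code has at least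
`M' (1 - 1/γ) = M' / (1 + ε) ≥ M` messages with `P_{e,m} ≤ (γ A) ^ ρ`. -/

open Finset

lemma Real.rpow_sum_le_sum_rpow {ι : Type*} (s : Finset ι) {f : ι → ℝ}
    (hf : ∀ i ∈ s, 0 ≤ f i) {p : ℝ} (hp : 0 < p) (hp1 : p ≤ 1) :
    (∑ i ∈ s, f i) ^ p ≤ ∑ i ∈ s, f i ^ p :=
  Finset.le_sum_of_subadditive_on_pred (· ^ p) (0 ≤ ·) (Real.zero_rpow hp.ne').le
    (fun _ _ ha hb => Real.rpow_add_le_add_rpow ha hb hp.le hp1)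
    (fun _ _ => add_nonneg) f hf

lemma Finset.card_filter_lt_mul_le_sum {ι : Type*} (s : Finset ι) {f : ι → ℝ}
    (hf : ∀ i ∈ s, 0 ≤ f i) (t : ℝ) :
    (#{i ∈ s | t < f i} : ℝ) * t ≤ ∑ i ∈ s, f i :=
  calc (#{i ∈ s | t < f i} : ℝ) * t
      ≤ ∑ i ∈ s with t < f i, f i := by
        rw [← nsmul_eq_mul]
        exact card_nsmul_le_sum _ _ _ fun i hi => (mem_filter.mp hi).2.le
    _ ≤ ∑ i ∈ s, f i :=
        sum_le_sum_of_subset_of_nonneg (filter_subset _ _) fun i hi _ => hf i hi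

section Pmf

variable {α : Type*} [Fintype α] {μ : α → ℝ}

lemma IsPMF.exists_pos (hμ : IsPMF μ) : ∃ a, 0 < μ a := by
  by_contra! h
  have : ∑ a, μ a = 0 := sum_eq_zero fun a _ => le_antisymm (h a) (hμ.1 a)
  linarith [hμ.2]

lemma pmfExp_mono (hμ : ∀ a, 0 ≤ μ a) {f g : α → ℝ} (h : ∀ a, f a ≤ g a) :
    pmfExp μ f ≤ pmfExp μ g :=
  sum_le_sum fun a _ => mul_le_mul_of_nonneg_left (h a) (hμ a)

lemma pmfExp_sum {ι : Type*} (s : Finset ι) (f : ι → α → ℝ) :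
    pmfExp μ (fun a => ∑ i ∈ s, f i a) = ∑ i ∈ s, pmfExp μ (f i) := by
  simp only [pmfExp, mul_sum]
  exact sum_comm

lemma pmfExp_comp {β : Type*} [Fintype β] (μ : α → ℝ) (φ : α → β) (g : β → ℝ) :
    pmfExp μ (g ∘ φ) = ∑ b, pmfProb μ (fun a => φ a = b) * g b := by
  simp only [pmfExp, pmfProb, sum_mul, ite_mul, zero_mul, Function.comp]
  rw [sum_comm]
  simp

lemma IsPMF.exists_le_of_pmfExp_le (hμ : IsPMF μ) {f : α → ℝ} {t : ℝ}
    (h : pmfExp μ f ≤ t) : ∃ a, f a ≤ t := by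
  by_contra! hlt
  obtain ⟨a₀, ha₀⟩ := hμ.exists_pos
  have : ∑ a, μ a * t < pmfExp μ f :=
    sum_lt_sum (fun a _ => mul_le_mul_of_nonneg_left (hlt a).le (hμ.1 a))
      ⟨a₀, mem_univ _, mul_lt_mul_of_pos_left (hlt a₀) ha₀⟩
  rw [← sum_mul, hμ.2, one_mul] at this
  linarith

lemma IsPMF.exists_card_filter_lt_mul_le {ι : Type*} [Fintype ι] (hμ : IsPMF μ)
    {f : α → ι → ℝ} (hf : ∀ a i, 0 ≤ f a i) {A : ℝ} (hA : 0 < A)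
    (hE : ∀ i, pmfExp μ (fun a => f a i) ≤ A) (γ : ℝ) :
    ∃ a, (#{i | γ * A < f a i} : ℝ) * γ ≤ Fintype.card ι := by
  have hmean : pmfExp μ (fun a => (#{i | γ * A < f a i} : ℝ) * (γ * A))
      ≤ Fintype.card ι * A :=
    calc pmfExp μ (fun a => (#{i | γ * A < f a i} : ℝ) * (γ * A))
        ≤ pmfExp μ (fun a => ∑ i, f a i) :=
          pmfExp_mono hμ.1 fun a => card_filter_lt_mul_le_sum _ (fun i _ => hf a i) _
      _ = ∑ i, pmfExp μ (fun a => f a i) := pmfExp_sum _ _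
      _ ≤ ∑ _i : ι, A := sum_le_sum fun i _ => hE i
      _ = Fintype.card ι * A := by simp
  obtain ⟨a, ha⟩ := hμ.exists_le_of_pmfExp_le hmean
  exact ⟨a, le_of_mul_le_mul_right (by linarith) hA⟩

end Pmf

lemma PairwiseIndepEnsemble.pmfExp_pair {𝒳 : Type*} [Fintype 𝒳] {M : ℕ}
    {μ : (Fin M → 𝒳) → ℝ} {Q : 𝒳 → ℝ} (hμ : PairwiseIndepEnsemble μ Q) {m k : Fin M}
    (hmk : m ≠ k) (g : 𝒳 → 𝒳 → ℝ) :
    pmfExp μ (fun c => g (c m) (c k)) = ∑ x, ∑ x', Q x * Q x' * g x x' := by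
  rw [show (fun c : Fin M → 𝒳 => g (c m) (c k)) = Function.uncurry g ∘ fun c => (c m, c k)
    from rfl, pmfExp_comp, Fintype.sum_prod_type]
  simp only [Prod.mk.injEq, hμ.2.2.2 m k hmk, Function.uncurry_apply_pair]

section Channel

variable {𝒳 𝒴 : Type*} [Fintype 𝒴] {W : 𝒳 → 𝒴 → ℝ}

lemma Bhat_nonneg (W : 𝒳 → 𝒴 → ℝ) (x x' : 𝒳) : 0 ≤ Bhat W x x' :=
  sum_nonneg fun _ _ => Real.sqrt_nonneg _

lemma IsChannel.Bhat_self (hW : IsChannel W) (x : 𝒳) : Bhat W x x = 1 := by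
  simp only [Bhat, Real.sqrt_mul_self (hW.1 x _)]
  exact hW.2 x

lemma IsChannel.sum_mul_Bhat_rpow_pos [Fintype 𝒳] (hW : IsChannel W) {Q : 𝒳 → ℝ}
    (hQ : IsPMF Q) (s : ℝ) : 0 < ∑ x, ∑ x', Q x * Q x' * Bhat W x x' ^ s := by
  have hterm : ∀ x x', 0 ≤ Q x * Q x' * Bhat W x x' ^ s := fun x x' =>
    mul_nonneg (mul_nonneg (hQ.1 x) (hQ.1 x')) (Real.rpow_nonneg (Bhat_nonneg W x x') s)
  obtain ⟨x₀, hx₀⟩ := hQ.exists_pos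
  refine sum_pos' (fun x _ => sum_nonneg fun x' _ => hterm x x') ⟨x₀, mem_univ _, ?_⟩
  refine sum_pos' (fun x' _ => hterm x₀ x') ⟨x₀, mem_univ _, ?_⟩
  rw [hW.Bhat_self, Real.one_rpow, mul_one]
  exact mul_pos hx₀ hx₀

lemma Pem_nonneg (hW : ∀ x y, 0 ≤ W x y) {M : ℕ} (c : Fin M → 𝒳) (m : Fin M) :
    0 ≤ Pem W c m :=
  sum_nonneg fun _ _ => mul_nonneg (hW _ _) (by positivity)

lemma Pem_le_sum_Bhat (hW : ∀ x y, 0 ≤ W x y) {M : ℕ} (c : Fin M → 𝒳) (m : Fin M) :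
    Pem W c m ≤ ∑ k ∈ univ.erase m, Bhat W (c m) (c k) := by
  simp only [Pem, Bhat]
  rw [sum_comm]
  refine sum_le_sum fun y _ => ?_
  split_ifs with h
  · obtain ⟨k, hkm, hle⟩ := h
    calc W (c m) y * 1 = √(W (c m) y * W (c m) y) := by rw [mul_one, Real.sqrt_mul_self (hW _ _)]
      _ ≤ √(W (c m) y * W (c k) y) := by gcongr; exact hW _ _
      _ ≤ ∑ j ∈ univ.erase m, √(W (c m) y * W (c j) y) :=
          single_le_sum (f := fun j => √(W (c m) y * W (c j) y))
            (fun _ _ => Real.sqrt_nonneg _) (mem_erase.mpr ⟨hkm, mem_univ _⟩)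
  · rw [mul_zero]
    exact sum_nonneg fun _ _ => Real.sqrt_nonneg _

lemma Pem_rpow_le_sum_Bhat_rpow (hW : ∀ x y, 0 ≤ W x y) {M : ℕ} (c : Fin M → 𝒳) (m : Fin M)
    {s : ℝ} (hs : 0 < s) (hs1 : s ≤ 1) :
    Pem W c m ^ s ≤ ∑ k ∈ univ.erase m, Bhat W (c m) (c k) ^ s :=
  (Real.rpow_le_rpow (Pem_nonneg hW c m) (Pem_le_sum_Bhat hW c m) hs.le).trans
    (Real.rpow_sum_le_sum_rpow _ (fun _ _ => Bhat_nonneg W _ _) hs hs1)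

lemma PairwiseIndepEnsemble.pmfExp_Pem_rpow_le [Fintype 𝒳] (hW : ∀ x y, 0 ≤ W x y)
    {M : ℕ} {μ : (Fin M → 𝒳) → ℝ} {Q : 𝒳 → ℝ} (hμ : PairwiseIndepEnsemble μ Q) (m : Fin M)
    {s : ℝ} (hs : 0 < s) (hs1 : s ≤ 1) :
    pmfExp μ (fun c => Pem W c m ^ s)
      ≤ ((M : ℝ) - 1) * ∑ x, ∑ x', Q x * Q x' * Bhat W x x' ^ s :=
  calc pmfExp μ (fun c => Pem W c m ^ s)
      ≤ pmfExp μ (fun c => ∑ k ∈ univ.erase m, Bhat W (c m) (c k) ^ s) :=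
        pmfExp_mono hμ.1.1 fun c => Pem_rpow_le_sum_Bhat_rpow hW c m hs hs1
    _ = ∑ k ∈ univ.erase m, pmfExp μ (fun c => Bhat W (c m) (c k) ^ s) := pmfExp_sum _ _
    _ = ∑ _k ∈ univ.erase m, ∑ x, ∑ x', Q x * Q x' * Bhat W x x' ^ s :=
        sum_congr rfl fun k hk =>
          hμ.pmfExp_pair (mem_erase.mp hk).1.symm fun x x' => Bhat W x x' ^ s
    _ = ((M : ℝ) - 1) * ∑ x, ∑ x', Q x * Q x' * Bhat W x x' ^ s := by
        rw [sum_const, card_erase_of_mem (mem_univ m), card_univ, Fintype.card_fin,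
          nsmul_eq_mul, Nat.cast_pred m.pos]

end Channel

theorem refined_expurgation_exists_general
    {𝒳 𝒴 : Type*} [Fintype 𝒳] [Fintype 𝒴]
    (n : ℕ)
    (W : (Fin n → 𝒳) → (Fin n → 𝒴) → ℝ) (hW : IsChannel W)
    (Q : (Fin n → 𝒳) → ℝ) (ε : ℝ) (hε : 0 < ε) (M : ℕ)
    (M' : ℕ) (hM'ge : (M : ℝ) * (1 + ε) ≤ (M' : ℝ)) (hM' : 2 ≤ M')
    (μ : (Fin M' → (Fin n → 𝒳)) → ℝ) (hμ : PairwiseIndepEnsemble μ Q)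
    (ρ : ℝ) (hρ : 1 ≤ ρ) (γ : ℝ) (hγ : γ = (1 + ε) / ε) :
    ∃ c : Fin M' → (Fin n → 𝒳),
      M ≤ (Finset.univ.filter (fun m : Fin M' =>
        Pem W c m ≤
          γ ^ ρ *
            (((M' : ℝ) - 1) * ∑ x, ∑ x', Q x * Q x' * Bhat W x x' ^ (1/ρ)) ^ ρ)).card := by
  set A := ((M' : ℝ) - 1) * ∑ x, ∑ x', Q x * Q x' * Bhat W x x' ^ (1/ρ)
  have hρ0 : 0 < ρ := by linarith
  have hγ0 : 0 < γ := hγ ▸ by positivity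
  have hA : 0 < A := mul_pos (by linarith [(Nat.ofNat_le_cast.mpr hM' : (2 : ℝ) ≤ M')])
    (hW.sum_mul_Bhat_rpow_pos hμ.2.1 _)
  obtain ⟨c, hc⟩ := hμ.1.exists_card_filter_lt_mul_le (f := fun c m => Pem W c m ^ (1/ρ))
    (fun c m => Real.rpow_nonneg (Pem_nonneg hW.1 c m) _) hA
    (fun m => hμ.pmfExp_Pem_rpow_le hW.1 m (by positivity) ((div_le_one hρ0).mpr hρ)) γ
  refine ⟨c, ?_⟩
  have hgood : ∀ m, Pem W c m ≤ γ ^ ρ * A ^ ρ ↔ ¬ γ * A < Pem W c m ^ (1/ρ) := fun m => by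
    rw [not_lt, one_div, Real.rpow_inv_le_iff_of_pos (Pem_nonneg hW.1 c m) (by positivity) hρ0,
      Real.mul_rpow hγ0.le hA.le]
  set bad : ℝ := ((#{m | γ * A < Pem W c m ^ (1/ρ)} : ℕ) : ℝ)
  have hsplit : bad + #{m | Pem W c m ≤ γ ^ ρ * A ^ ρ} = M' := by
    simp_rw [bad, hgood]
    exact_mod_cast (card_filter_add_card_filter_not (s := univ) _).trans (card_fin M')
  rw [Fintype.card_fin, hγ, mul_div_assoc', div_le_iff₀ hε] at hc
  have hcount : (M : ℝ) * (1 + ε) ≤ #{m | Pem W c m ≤ γ ^ ρ * A ^ ρ} * (1 + ε) := by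
    linear_combination hM'ge + hc - (1 + ε) * hsplit
  exact_mod_cast le_of_mul_le_mul_right hcount (by linarith)

/-- refined expurgation with vanishing expurgated fraction,
existence form: with `M' ≥ M(1+ε)` codewords and `γ = (1+ε)/ε`, there exists a
code in which at least `M` codewords satisfy the expurgated bound. -/
theorem refined_expurgation_exists
    {𝒳 𝒴 : Type*} [Fintype 𝒳] [Fintype 𝒴] [Nonempty 𝒳] [Nonempty 𝒴]
    (n : ℕ) (hn : 1 ≤ n)
    (W : (Fin n → 𝒳) → (Fin n → 𝒴) → ℝ) (hW : IsChannel W)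
    (Q : (Fin n → 𝒳) → ℝ) (ε : ℝ) (hε : 0 < ε) (M : ℕ) (hM : 1 ≤ M)
    (M' : ℕ) (hM'ge : (M : ℝ) * (1 + ε) ≤ (M' : ℝ)) (hM' : 2 ≤ M')
    (μ : (Fin M' → (Fin n → 𝒳)) → ℝ) (hμ : PairwiseIndepEnsemble μ Q)
    (ρ : ℝ) (hρ : 1 ≤ ρ) (γ : ℝ) (hγ : γ = (1 + ε) / ε) :
    ∃ c : Fin M' → (Fin n → 𝒳),
      M ≤ (Finset.univ.filter (fun m : Fin M' =>
        Pem W c m ≤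
          γ ^ ρ *
            (((M' : ℝ) - 1) * ∑ x, ∑ x', Q x * Q x' * Bhat W x x' ^ (1/ρ)) ^ ρ)).card :=
  refined_expurgation_exists_general n W hW Q ε hε M M' hM'ge hM' μ hμ ρ hρ γ hγ
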